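/- arXiv:0711.3342 — 3 statements merged into one kernel-verified Lean document; each statement's English description precedes it below -/
import Mathlib

section
/- (Discretization inequality for Hölder functions.) For every α ∈ (0,1), every n ≥ 1 and all f, g : [0,1] → ℝ with finite ‖·‖_{H^α} norm, Σ_{i=0}^{n} |f(i/n) − g(i/n)|² ≤ 4n·∫₀¹ (f(x) − g(x))² dx + 8·n^{1−2α}·( ‖f‖²_{H^α} + ‖g‖²_{H^α} ). -/
/-
Write `h = f - g` and `[f]_α` for the Hölder seminorm. On a cell `[k/n, (k+1)/n]` the oscillation
of `h` is at most `M = ([f]_α + [g]_α) n^{-α}`, so `h(p)² ≤ 2h(x)² + 2M²` for a node `p` of the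
cell and every `x` in it; averaging over the cell gives `h(p)² ≤ 2n ∫_cell h² + 2M²`. Assigning
the node `0` to the first cell and the node `(k+1)/n` to the `k`-th cell uses every cell at most
twice, so the sum is at most `4n ∫₀¹ h² + 2(n+1)M²`, and `(n+1)M² ≤ 2n^{1-2α}([f]_α + [g]_α)²`.
-/

open MeasureTheory ProbabilityTheory Real Filter
open scoped ENNReal NNReal

noncomputable section

/-- The sup norm of `f` over `[0,1]`. -/
def supIcc (f : ℝ → ℝ) : ℝ := ⨆ t : Set.Icc (0 : ℝ) 1, |f (t : ℝ)|

/-- The Hölder seminorm `sup_{0 ≤ s < t ≤ 1} |f(t) - f(s)|/(t-s)^α`. -/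
def holderSemi (α : ℝ) (f : ℝ → ℝ) : ℝ :=
  ⨆ p : {p : ℝ × ℝ // 0 ≤ p.1 ∧ p.1 < p.2 ∧ p.2 ≤ 1},
    |f (p : ℝ × ℝ).2 - f (p : ℝ × ℝ).1| / ((p : ℝ × ℝ).2 - (p : ℝ × ℝ).1) ^ α

/-- The Hölder norm `‖f‖_{H^α} = sup_{[0,1]} |f| + sup_{0 ≤ s < t ≤ 1} |f(t)-f(s)|/(t-s)^α`. -/
def hNorm (α : ℝ) (f : ℝ → ℝ) : ℝ := supIcc f + holderSemi α f

/-- `f` has finite `H^α` norm (the suprema defining `‖f‖_{H^α}` are finite). -/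
def FiniteHolderNorm (α : ℝ) (f : ℝ → ℝ) : Prop :=
  BddAbove (Set.range fun t : Set.Icc (0 : ℝ) 1 => |f (t : ℝ)|) ∧
  BddAbove (Set.range fun p : {p : ℝ × ℝ // 0 ≤ p.1 ∧ p.1 < p.2 ∧ p.2 ≤ 1} =>
    |f (p : ℝ × ℝ).2 - f (p : ℝ × ℝ).1| / ((p : ℝ × ℝ).2 - (p : ℝ × ℝ).1) ^ α)

open Set Topology

namespace FiniteHolderNorm

variable {α : ℝ} {f : ℝ → ℝ}

theorem supIcc_nonneg (hf : FiniteHolderNorm α f) : 0 ≤ supIcc f :=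
  (abs_nonneg _).trans (le_ciSup hf.1 ⟨0, left_mem_Icc.2 zero_le_one⟩)

theorem holderSemi_nonneg (hf : FiniteHolderNorm α f) : 0 ≤ holderSemi α f :=
  le_trans (by positivity) (le_ciSup hf.2 ⟨(0, 1), le_rfl, one_pos, le_rfl⟩)

theorem holderSemi_le_hNorm (hf : FiniteHolderNorm α f) : holderSemi α f ≤ hNorm α f :=
  le_add_of_nonneg_left hf.supIcc_nonneg

theorem abs_sub_le (hf : FiniteHolderNorm α f) {s t : ℝ} (hs : s ∈ Icc (0 : ℝ) 1)
    (ht : t ∈ Icc (0 : ℝ) 1) : |f t - f s| ≤ holderSemi α f * |t - s| ^ α := by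
  wlog hst : s ≤ t generalizing s t
  · rw [abs_sub_comm, abs_sub_comm t]
    exact this ht hs (le_of_not_ge hst)
  rcases hst.eq_or_lt with rfl | hlt
  · simpa using mul_nonneg hf.holderSemi_nonneg (rpow_nonneg le_rfl α)
  have hpos : 0 < (t - s) ^ α := rpow_pos_of_pos (sub_pos.2 hlt) α
  rw [abs_of_pos (sub_pos.2 hlt), ← div_le_iff₀ hpos]
  exact le_ciSup hf.2 ⟨(s, t), hs.1, hlt, ht.2⟩

theorem continuousOn (hf : FiniteHolderNorm α f) (hα : 0 < α) :
    ContinuousOn f (Icc (0 : ℝ) 1) := by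
  intro x hx
  have hbound : Tendsto (fun y => holderSemi α f * |y - x| ^ α) (𝓝[Icc 0 1] x) (𝓝 0) := by
    have hcont : Continuous fun y => holderSemi α f * |y - x| ^ α := by
      fun_prop (disch := exact hα.le)
    simpa [zero_rpow hα.ne'] using (hcont.tendsto x).mono_left nhdsWithin_le_nhds
  refine tendsto_iff_norm_sub_tendsto_zero.2 <|
    squeeze_zero' (Eventually.of_forall fun _ => norm_nonneg _) ?_ hbound
  exact eventually_nhdsWithin_of_forall fun y hy => hf.abs_sub_le hx hy

theorem abs_sub_sub_sub_le {g : ℝ → ℝ} (hf : FiniteHolderNorm α f) (hg : FiniteHolderNorm α g)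
    {s t : ℝ} (hs : s ∈ Icc (0 : ℝ) 1) (ht : t ∈ Icc (0 : ℝ) 1) :
    |(f t - g t) - (f s - g s)| ≤ (holderSemi α f + holderSemi α g) * |t - s| ^ α :=
  calc |(f t - g t) - (f s - g s)| ≤ |f t - f s| + |g t - g s| := by
        rw [sub_sub_sub_comm]; exact abs_sub _ _
    _ ≤ (holderSemi α f + holderSemi α g) * |t - s| ^ α := by
        rw [add_mul]; exact add_le_add (hf.abs_sub_le hs ht) (hg.abs_sub_le hs ht)

end FiniteHolderNorm

theorem sq_le_two_mul_inv_mul_integral_sq_add {h : ℝ → ℝ} {a b p M : ℝ} (hab : a < b)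
    (hint : IntervalIntegrable (fun x => h x ^ 2) volume a b)
    (hM : ∀ x ∈ Icc a b, |h p - h x| ≤ M) :
    h p ^ 2 ≤ 2 * (b - a)⁻¹ * (∫ x in a..b, h x ^ 2) + 2 * M ^ 2 := by
  have hpt : ∀ x ∈ Icc a b, h p ^ 2 ≤ 2 * h x ^ 2 + 2 * M ^ 2 := by
    intro x hx
    have hsq : (h p - h x) ^ 2 ≤ M ^ 2 := sq_le_sq' (abs_le.1 (hM x hx)).1 (abs_le.1 (hM x hx)).2
    nlinarith [sq_nonneg (h p - 2 * h x)]
  have hmono := intervalIntegral.integral_mono_on hab.le intervalIntegrable_const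
    ((hint.const_mul 2).add intervalIntegrable_const) hpt
  rw [intervalIntegral.integral_add (hint.const_mul 2) intervalIntegrable_const,
    intervalIntegral.integral_const_mul, intervalIntegral.integral_const,
    intervalIntegral.integral_const, smul_eq_mul, smul_eq_mul] at hmono
  have hba : 0 < b - a := sub_pos.2 hab
  calc h p ^ 2 = (b - a)⁻¹ * ((b - a) * h p ^ 2) := by field_simp
    _ ≤ (b - a)⁻¹ * (2 * (∫ x in a..b, h x ^ 2) + (b - a) * (2 * M ^ 2)) := by gcongr
    _ = 2 * (b - a)⁻¹ * (∫ x in a..b, h x ^ 2) + 2 * M ^ 2 := by field_simp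

theorem sum_range_sq_le_of_abs_sub_le {h : ℝ → ℝ} {n : ℕ} (hn : 0 < n) {M : ℝ}
    (hint : IntervalIntegrable (fun x => h x ^ 2) volume 0 1)
    (hM : ∀ s ∈ Icc (0 : ℝ) 1, ∀ t ∈ Icc (0 : ℝ) 1, |s - t| ≤ (n : ℝ)⁻¹ → |h s - h t| ≤ M) :
    ∑ i ∈ Finset.range (n + 1), h (i / n) ^ 2
      ≤ 4 * n * (∫ x in (0 : ℝ)..1, h x ^ 2) + 2 * (n + 1) * M ^ 2 := by
  have hn' : (0 : ℝ) < n := Nat.cast_pos.2 hn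
  set a : ℕ → ℝ := fun k => k / n with ha
  set c : ℕ → ℝ := fun k => ∫ x in a k..a (k + 1), h x ^ 2 with hc
  have ha_mem : ∀ k ≤ n, a k ∈ Icc (0 : ℝ) 1 := fun k hk =>
    ⟨by positivity, div_le_one_of_le₀ (Nat.cast_le.2 hk) hn'.le⟩
  have hlen : ∀ k, a (k + 1) - a k = (n : ℝ)⁻¹ := fun k => by
    simp only [ha]; push_cast; field_simp; ring
  have hstep : ∀ k, a k ≤ a (k + 1) := fun k => sub_nonneg.1 ((hlen k).symm ▸ by positivity)
  have hcell_sub : ∀ k < n, Icc (a k) (a (k + 1)) ⊆ Icc 0 1 := fun k hk =>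
    Icc_subset_Icc (ha_mem k hk.le).1 (ha_mem (k + 1) hk).2
  have hint_cell : ∀ k < n, IntervalIntegrable (fun x => h x ^ 2) volume (a k) (a (k + 1)) :=
    fun k hk => hint.mono_set (by
      rw [uIcc_of_le (hstep k), uIcc_of_le zero_le_one]
      exact hcell_sub k hk)
  have hcell : ∀ k < n, ∀ p ∈ Icc (a k) (a (k + 1)), h p ^ 2 ≤ 2 * n * c k + 2 * M ^ 2 := by
    intro k hk p hp
    have := sq_le_two_mul_inv_mul_integral_sq_add
      (sub_pos.1 ((hlen k).symm ▸ by positivity)) (hint_cell k hk) fun x hx =>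
      hM p (hcell_sub k hk hp) x (hcell_sub k hk hx) ((hlen k) ▸ Real.dist_le_of_mem_Icc hp hx)
    rwa [hlen, inv_inv] at this
  have hc_nonneg : ∀ k, 0 ≤ c k := fun k =>
    intervalIntegral.integral_nonneg (hstep k) fun _ _ => sq_nonneg _
  have hsum : ∑ k ∈ Finset.range n, c k = ∫ x in (0 : ℝ)..1, h x ^ 2 := by
    have := intervalIntegral.sum_integral_adjacent_intervals fun k hk => hint_cell k hk
    simpa [hc, ha, hn'.ne'] using this
  have hc0 : c 0 ≤ ∫ x in (0 : ℝ)..1, h x ^ 2 :=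
    hsum ▸ Finset.single_le_sum (fun k _ => hc_nonneg k) (Finset.mem_range.2 hn)
  rw [Finset.sum_range_succ']
  calc ∑ k ∈ Finset.range n, h (a (k + 1)) ^ 2 + h (a 0) ^ 2
      ≤ ∑ k ∈ Finset.range n, (2 * n * c k + 2 * M ^ 2) + (2 * n * c 0 + 2 * M ^ 2) := by
        gcongr with k hk
        · exact hcell k (Finset.mem_range.1 hk) _ ⟨hstep k, le_rfl⟩
        · exact hcell 0 hn _ ⟨le_rfl, hstep 0⟩
    _ ≤ 4 * n * (∫ x in (0 : ℝ)..1, h x ^ 2) + 2 * (n + 1) * M ^ 2 := by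
        rw [Finset.sum_add_distrib, ← Finset.mul_sum, hsum, Finset.sum_const, Finset.card_range,
          nsmul_eq_mul]
        nlinarith

theorem mul_inv_rpow_sq {x : ℝ} (hx : 0 < x) (α : ℝ) : x * (x⁻¹ ^ α) ^ 2 = x ^ (1 - 2 * α) := by
  rw [inv_rpow hx.le, ← rpow_neg hx.le, ← rpow_two, ← rpow_mul hx.le, mul_comm,
    ← rpow_add_one hx.ne']
  ring_nf

theorem two_mul_succ_mul_sq_le {n : ℕ} (hn : 1 ≤ n) (α C : ℝ) :
    2 * (n + 1) * (C * (n : ℝ)⁻¹ ^ α) ^ 2 ≤ 4 * (n : ℝ) ^ (1 - 2 * α) * C ^ 2 := by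
  have hn' : (n : ℝ) + 1 ≤ 2 * n := by linarith [(Nat.one_le_cast (α := ℝ)).2 hn]
  rw [← mul_inv_rpow_sq (Nat.cast_pos.2 hn), mul_pow]
  nlinarith [sq_nonneg (C * (n : ℝ)⁻¹ ^ α)]

/-- Discretization inequality for Hölder functions: for `α ∈ (0,1)`, `n ≥ 1` and
`f, g` with finite `H^α` norm,
`∑_{i=0}^n |f(i/n) - g(i/n)|² ≤ 4n ∫₀¹ (f-g)² + 8 n^{1-2α} (‖f‖²_{H^α} + ‖g‖²_{H^α})`. -/
theorem discretization_holder (α : ℝ) (hα : α ∈ Set.Ioo (0 : ℝ) 1)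
    (n : ℕ) (hn : 1 ≤ n) (f g : ℝ → ℝ)
    (hf : FiniteHolderNorm α f) (hg : FiniteHolderNorm α g) :
    ∑ i ∈ Finset.range (n + 1),
        (f ((i : ℝ) / (n : ℝ)) - g ((i : ℝ) / (n : ℝ))) ^ 2
      ≤ 4 * n * (∫ x in (0 : ℝ)..1, (f x - g x) ^ 2)
        + 8 * (n : ℝ) ^ (1 - 2 * α) * (hNorm α f ^ 2 + hNorm α g ^ 2) := by
  set C := holderSemi α f + holderSemi α g
  have hC : 0 ≤ C := add_nonneg hf.holderSemi_nonneg hg.holderSemi_nonneg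
  have hosc : ∀ s ∈ Icc (0 : ℝ) 1, ∀ t ∈ Icc (0 : ℝ) 1, |s - t| ≤ (n : ℝ)⁻¹ →
      |(f s - g s) - (f t - g t)| ≤ C * (n : ℝ)⁻¹ ^ α := fun s hs t ht hst =>
    (hf.abs_sub_sub_sub_le hg ht hs).trans <|
      mul_le_mul_of_nonneg_left (rpow_le_rpow (abs_nonneg _) hst hα.1.le) hC
  have hint : IntervalIntegrable (fun x => (f x - g x) ^ 2) volume 0 1 :=
    (((hf.continuousOn hα.1).sub (hg.continuousOn hα.1)).pow 2).intervalIntegrable_of_Icc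
      zero_le_one
  have hCsq : C ^ 2 ≤ 2 * (hNorm α f ^ 2 + hNorm α g ^ 2) := add_sq_le.trans <| by
    gcongr
    exacts [hf.holderSemi_nonneg, hf.holderSemi_le_hNorm,
      hg.holderSemi_nonneg, hg.holderSemi_le_hNorm]
  calc _ ≤ 4 * n * (∫ x in (0 : ℝ)..1, (f x - g x) ^ 2) + 2 * (n + 1) * (C * (n : ℝ)⁻¹ ^ α) ^ 2 :=
        sum_range_sq_le_of_abs_sub_le hn hint hosc
    _ ≤ 4 * n * (∫ x in (0 : ℝ)..1, (f x - g x) ^ 2) + 4 * (n : ℝ) ^ (1 - 2 * α) * C ^ 2 :=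
        add_le_add le_rfl (two_mul_succ_mul_sq_le hn α C)
    _ ≤ _ := add_le_add le_rfl <| by
        nlinarith [rpow_nonneg (Nat.cast_nonneg (α := ℝ) n) (1 - 2 * α)]

end
end

section
/- (Lemma 3, abstract form.) Let (X, 𝔛, P) be a probability space and T : X → X a measurable map such that P and the image measure T_*P are equivalent and ‖P − T_*P‖_TV ≤ 2 − c* for some c* ∈ (0,2). Then for every measurable set A ⊆ X and every λ > 0, P( A ∩ { ω : (dP/d(T_*P))(Tω) ≥ e^{−λ} } ) ≥ P(A) − e^{−λ} − 1 + c*/2. -/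
/-! Let `B = {dP/d(T_*P) ≥ e^{-λ}}`. On `Bᶜ` the density is below `e^{-λ}`, so `P(Bᶜ) ≤ e^{-λ}`;
the total variation bound gives `T_*P(Bᶜ) ≤ P(Bᶜ) + 1 - c*/2`. Since `A` is covered by
`A ∩ T⁻¹ B` and `T⁻¹ Bᶜ`, whose `P`-mass is `T_*P(Bᶜ)`, the claim follows. -/

open MeasureTheory ProbabilityTheory Real Filter
open scoped ENNReal NNReal

noncomputable section

/-- Total variation distance `‖μ - ν‖_TV = sup_{‖h‖_∞ ≤ 1} |∫ h dμ - ∫ h dν|`,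
expressed as `2 sup_A |μ(A) - ν(A)|` over measurable sets `A`. -/
def tvDist {α : Type*} [MeasurableSpace α] (μ ν : Measure α) : ℝ :=
  (2 * ⨆ (s : Set α) (_ : MeasurableSet s), ((μ s - ν s) ⊔ (ν s - μ s))).toReal

namespace MeasureTheory.Measure

variable {α : Type*} [MeasurableSpace α] {μ ν : Measure α}

theorem measure_le_mul_of_ae_rnDeriv_le [μ.HaveLebesgueDecomposition ν] (hμν : μ ≪ ν)
    {s : Set α} (hs : MeasurableSet s) {c : ℝ≥0∞} (hc : ∀ᵐ x ∂ν, x ∈ s → μ.rnDeriv ν x ≤ c) :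
    μ s ≤ c * ν s :=
  calc μ s = ∫⁻ x in s, μ.rnDeriv ν x ∂ν := (setLIntegral_rnDeriv' hμν hs).symm
    _ ≤ ∫⁻ _ in s, c ∂ν := setLIntegral_mono_ae' hs hc
    _ = c * ν s := setLIntegral_const s c

theorem measureReal_rnDeriv_toReal_lt_le [SigmaFinite μ] [IsProbabilityMeasure ν] (hμν : μ ≪ ν)
    {r : ℝ} (hr : 0 ≤ r) : μ.real {x | (μ.rnDeriv ν x).toReal < r} ≤ r := by
  have hs : MeasurableSet {x | (μ.rnDeriv ν x).toReal < r} :=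
    measurableSet_lt (measurable_rnDeriv μ ν).ennreal_toReal measurable_const
  refine ENNReal.toReal_le_of_le_ofReal hr ?_
  calc μ {x | (μ.rnDeriv ν x).toReal < r}
      ≤ ENNReal.ofReal r * ν {x | (μ.rnDeriv ν x).toReal < r} := by
        refine measure_le_mul_of_ae_rnDeriv_le hμν hs ?_
        filter_upwards [rnDeriv_ne_top μ ν] with x hfin hlt
        exact (ENNReal.ofReal_toReal hfin).symm.trans_le (ENNReal.ofReal_le_ofReal hlt.le)
    _ ≤ ENNReal.ofReal r := mul_le_of_le_one_right' prob_le_one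

end MeasureTheory.Measure

theorem two_mul_sub_le_tvDist {α : Type*} [MeasurableSpace α] {μ ν : Measure α}
    [IsFiniteMeasure μ] [IsFiniteMeasure ν] {s : Set α} (hs : MeasurableSet s) :
    2 * (ν.real s - μ.real s) ≤ tvDist μ ν := by
  set S := ⨆ (t : Set α) (_ : MeasurableSet t), ((μ t - ν t) ⊔ (ν t - μ t))
  have hS : S ≠ ∞ := by
    refine ne_top_of_le_ne_top (b := μ Set.univ + ν Set.univ) (by finiteness) ?_
    refine iSup₂_le fun t _ => sup_le ?_ ?_
    · exact tsub_le_self.trans ((measure_mono (Set.subset_univ t)).trans le_self_add)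
    · exact tsub_le_self.trans ((measure_mono (Set.subset_univ t)).trans le_add_self)
  have hsub : ν.real s - μ.real s ≤ S.toReal :=
    calc ν.real s - μ.real s ≤ (ν s - μ s).toReal := ENNReal.le_toReal_sub (measure_ne_top μ s)
      _ ≤ S.toReal := ENNReal.toReal_mono hS (le_iSup₂_of_le s hs le_sup_right)
  simp only [tvDist, ENNReal.toReal_mul, ENNReal.toReal_ofNat]
  linarith

theorem lemma3_abstract_general
    {X : Type*} [MeasurableSpace X] (P : Measure X) [IsProbabilityMeasure P]
    (T : X → X) (hT : Measurable T)
    (hac₂ : P ≪ P.map T)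
    (cstar : ℝ)
    (htv : tvDist P (P.map T) ≤ 2 - cstar)
    (A : Set X) (lam : ℝ) :
    (P A).toReal - Real.exp (-lam) - 1 + cstar / 2
      ≤ (P (A ∩ {ω | Real.exp (-lam) ≤ (P.rnDeriv (P.map T) (T ω)).toReal})).toReal := by
  set Q := P.map T
  have : IsProbabilityMeasure Q := Measure.isProbabilityMeasure_map hT.aemeasurable
  set B := {x | Real.exp (-lam) ≤ (P.rnDeriv Q x).toReal}
  have hB : MeasurableSet B :=
    measurableSet_le measurable_const (P.measurable_rnDeriv Q).ennreal_toReal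
  have hBc : Bᶜ = {x | (P.rnDeriv Q x).toReal < Real.exp (-lam)} := by
    ext x; simp [B]
  have hP_Bc : P.real Bᶜ ≤ Real.exp (-lam) :=
    hBc ▸ Measure.measureReal_rnDeriv_toReal_lt_le hac₂ (Real.exp_nonneg _)
  have hQ_Bc : 2 * (Q.real Bᶜ - P.real Bᶜ) ≤ 2 - cstar :=
    (two_mul_sub_le_tvDist hB.compl).trans htv
  have hunion : P.real A ≤ P.real (A ∩ T ⁻¹' B) + Q.real Bᶜ :=
    calc P.real A ≤ P.real ((A ∩ T ⁻¹' B) ∪ T ⁻¹' Bᶜ) :=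
          measureReal_mono fun x hx => (em (T x ∈ B)).imp (⟨hx, ·⟩) id
      _ ≤ P.real (A ∩ T ⁻¹' B) + P.real (T ⁻¹' Bᶜ) := measureReal_union_le _ _
      _ = P.real (A ∩ T ⁻¹' B) + Q.real Bᶜ := by rw [map_measureReal_apply hT hB.compl]
  change P.real A - _ - 1 + cstar / 2 ≤ P.real (A ∩ T ⁻¹' B)
  linarith

/-- Lemma 3, abstract form: if `T : X → X` is measurable, `P` and `T_*P` are equivalent
and `‖P - T_*P‖_TV ≤ 2 - c*` for some `c* ∈ (0,2)`, then for every measurable `A` and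
every `λ > 0`,
`P(A ∩ {ω : dP/d(T_*P)(Tω) ≥ e^{-λ}}) ≥ P(A) - e^{-λ} - 1 + c*/2`. -/
theorem lemma3_abstract
    {X : Type*} [MeasurableSpace X] (P : Measure X) [IsProbabilityMeasure P]
    (T : X → X) (hT : Measurable T)
    (hac₁ : P.map T ≪ P) (hac₂ : P ≪ P.map T)
    (cstar : ℝ) (hcstar : cstar ∈ Set.Ioo (0 : ℝ) 2)
    (htv : tvDist P (P.map T) ≤ 2 - cstar)
    (A : Set X) (hA : MeasurableSet A) (lam : ℝ) (hlam : 0 < lam) :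
    (P A).toReal - Real.exp (-lam) - 1 + cstar / 2
      ≤ (P (A ∩ {ω | Real.exp (-lam) ≤ (P.rnDeriv (P.map T) (T ω)).toReal})).toReal :=
  lemma3_abstract_general P T hT hac₂ cstar htv A lam

end
end

section
/- (Total variation bounded away from 2 under bounded Kullback–Leibler divergence.) For any two probability measures μ and ν on a measurable space with D(μ‖ν) < ∞, one has 1 − (1/2)‖μ − ν‖_TV ≥ (1/2)·e^{−D(μ‖ν)}; in particular, for every K < ∞ there exists δ(K) > 0 such that D(μ‖ν) ≤ K implies ‖μ − ν‖_TV ≤ 2 − δ(K). -/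
open MeasureTheory ProbabilityTheory Real Filter
open scoped ENNReal NNReal

noncomputable section

open Classical in
/-- Kullback–Leibler divergence `D(μ‖ν) = ∫ log(dμ/dν) dμ`, set to `∞` if `μ` is not
absolutely continuous with respect to `ν` (or the log-likelihood ratio is not integrable). -/
def klDiv' {α : Type*} [MeasurableSpace α] (μ ν : Measure α) : ℝ≥0∞ :=
  if μ ≪ ν ∧ Integrable (llr μ ν) μ
  then ENNReal.ofReal (∫ x, llr μ ν x ∂μ) else ⊤

/-! With `f = dμ/dν`, the measure `ν.withDensity (min f 1)` lies below both `μ` and `ν`, and a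
common minorant `ρ` of two probability measures forces `‖μ - ν‖_TV ≤ 2 (1 - ρ univ)`. Changing
variables to `μ`, `∫ min f 1 dν = ∫ exp (-(log f)⁺) dμ ≥ exp (-∫ (log f)⁺ dμ)` by Jensen, and
`∫ (log f)⁻ dμ = ∫ f (log f)⁻ dν ≤ e⁻¹` since `t log (1/t) ≤ e⁻¹`; finally `exp (-e⁻¹) ≥ 1/2`. -/

namespace Real

lemma negMulLog_le_exp_neg_one {x : ℝ} (hx : 0 ≤ x) : negMulLog x ≤ exp (-1) := by
  rcases hx.eq_or_lt with rfl | hx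
  · simpa using (exp_pos (-1)).le
  simpa [negMulLog, exp_log hx, mul_comm] using mul_exp_neg_le_exp_neg_one (-log x)

lemma min_one_eq_mul_exp_neg_max_log {t : ℝ} (ht : 0 ≤ t) :
    min t 1 = t * exp (-max (log t) 0) := by
  rcases le_or_gt t 1 with h1 | h1
  · rw [min_eq_left h1, max_eq_right (log_nonpos ht h1)]
    simp
  · rw [min_eq_right h1.le, max_eq_left (log_nonneg h1.le), exp_neg, exp_log (by linarith),
      mul_inv_cancel₀ (by positivity)]

lemma half_le_exp_neg_exp_neg_one : (1 / 2 : ℝ) ≤ exp (-exp (-1)) := by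
  have h2 : 2 ≤ exp 1 := by linarith [add_one_le_exp 1]
  have : exp (-1) ≤ 1 / 2 := by
    rw [exp_neg, one_div]
    exact inv_anti₀ (by norm_num) h2
  linarith [add_one_le_exp (-exp (-1))]

end Real

section

open Set

variable {α : Type*} [MeasurableSpace α] {μ ν ρ : Measure α}

lemma measure_sub_measure_le_one_sub_of_le [IsProbabilityMeasure μ] (hρμ : ρ ≤ μ) (hρν : ρ ≤ ν)
    {s : Set α} (hs : MeasurableSet s) : μ s - ν s ≤ 1 - ρ univ := by
  have hρ1 : ρ univ ≤ 1 := (hρμ univ).trans prob_le_one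
  have h_add : μ s + ρ univ ≤ 1 + ν s :=
    calc μ s + ρ univ = μ s + ρ sᶜ + ρ s := by
          rw [← measure_add_measure_compl hs, add_comm (ρ s), add_assoc]
      _ ≤ μ s + μ sᶜ + ν s := by gcongr
      _ = 1 + ν s := by rw [prob_add_prob_compl hs]
  have hρ_top : ρ univ ≠ ∞ := ne_top_of_le_ne_top ENNReal.one_ne_top hρ1
  rw [tsub_le_iff_right, ENNReal.sub_add_eq_add_sub hρ1 hρ_top]
  exact ENNReal.le_sub_of_add_le_right hρ_top h_add

lemma tvDist_le_two_mul_one_sub_of_le_of_le [IsProbabilityMeasure μ] [IsProbabilityMeasure ν]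
    (hρμ : ρ ≤ μ) (hρν : ρ ≤ ν) : tvDist μ ν ≤ 2 * (1 - ρ.real univ) := by
  have hρ1 : ρ univ ≤ 1 := (hρμ univ).trans prob_le_one
  have hsup : ⨆ (s : Set α) (_ : MeasurableSet s), ((μ s - ν s) ⊔ (ν s - μ s)) ≤ 1 - ρ univ :=
    iSup₂_le fun s hs ↦ sup_le (measure_sub_measure_le_one_sub_of_le hρμ hρν hs)
      (measure_sub_measure_le_one_sub_of_le (μ := ν) hρν hρμ hs)
  calc tvDist μ ν ≤ (2 * (1 - ρ univ)).toReal :=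
        ENNReal.toReal_mono (by finiteness) (by gcongr)
    _ = 2 * (1 - ρ.real univ) := by
        rw [ENNReal.toReal_mul, ENNReal.toReal_sub_of_le hρ1 ENNReal.one_ne_top]
        simp [Measure.real]

lemma tvDist_le_two_mul_one_sub_integral_min_rnDeriv [IsProbabilityMeasure μ]
    [IsProbabilityMeasure ν] : tvDist μ ν ≤ 2 * (1 - ∫ x, min (μ.rnDeriv ν x).toReal 1 ∂ν) := by
  set p : α → ℝ := fun x ↦ min (μ.rnDeriv ν x).toReal 1
  have hp_int : Integrable p ν :=
    Integrable.of_bound ((Measure.measurable_rnDeriv μ ν).ennreal_toReal.min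
      measurable_const).aestronglyMeasurable 1 (ae_of_all _ fun x ↦ by
        rw [Real.norm_of_nonneg (le_min ENNReal.toReal_nonneg zero_le_one)]
        exact min_le_right _ _)
  have hρν : ν.withDensity (fun x ↦ ENNReal.ofReal (p x)) ≤ ν :=
    calc ν.withDensity (fun x ↦ ENNReal.ofReal (p x)) ≤ ν.withDensity 1 :=
          withDensity_mono (ae_of_all _ fun x ↦ ENNReal.ofReal_le_one.2 (min_le_right _ _))
      _ = ν := withDensity_one
  have hρμ : ν.withDensity (fun x ↦ ENNReal.ofReal (p x)) ≤ μ :=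
    calc ν.withDensity (fun x ↦ ENNReal.ofReal (p x)) ≤ ν.withDensity (μ.rnDeriv ν) :=
          withDensity_mono (ae_of_all _ fun x ↦ (ENNReal.ofReal_le_ofReal (min_le_left _ _)).trans
            ENNReal.ofReal_toReal_le)
      _ ≤ μ := Measure.withDensity_rnDeriv_le μ ν
  have hρ_univ : (ν.withDensity (fun x ↦ ENNReal.ofReal (p x))).real univ = ∫ x, p x ∂ν := by
    rw [Measure.real, withDensity_apply _ MeasurableSet.univ, Measure.restrict_univ,
      ← ofReal_integral_eq_lintegral_ofReal hp_int (ae_of_all _ fun x ↦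
        le_min ENNReal.toReal_nonneg zero_le_one),
      ENNReal.toReal_ofReal (integral_nonneg fun x ↦ le_min ENNReal.toReal_nonneg zero_le_one)]
  simpa [hρ_univ] using tvDist_le_two_mul_one_sub_of_le_of_le hρμ hρν

section

variable [SigmaFinite μ] [μ.HaveLebesgueDecomposition ν]

lemma integral_min_rnDeriv_one_eq_integral_exp_neg (hμν : μ ≪ ν) :
    ∫ x, min (μ.rnDeriv ν x).toReal 1 ∂ν = ∫ x, exp (-max (llr μ ν x) 0) ∂μ := by
  rw [← integral_rnDeriv_smul hμν]
  exact integral_congr_ae (ae_of_all _ fun x ↦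
    min_one_eq_mul_exp_neg_max_log ENNReal.toReal_nonneg)

lemma integral_max_neg_llr_zero_le [IsFiniteMeasure ν] (hμν : μ ≪ ν) :
    ∫ x, max (-llr μ ν x) 0 ∂μ ≤ ν.real univ * exp (-1) := by
  rw [← integral_rnDeriv_smul hμν]
  calc ∫ x, (μ.rnDeriv ν x).toReal • max (-llr μ ν x) 0 ∂ν ≤ ∫ _, exp (-1) ∂ν :=
        integral_mono_of_nonneg (ae_of_all _ fun x ↦ by positivity) (integrable_const _)
          (ae_of_all _ fun x ↦ by
            dsimp only
            rw [smul_eq_mul, mul_max_of_nonneg _ _ ENNReal.toReal_nonneg, mul_zero]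
            exact max_le (by simpa [negMulLog, llr_def] using
              negMulLog_le_exp_neg_one (ENNReal.toReal_nonneg (a := μ.rnDeriv ν x)))
              (exp_pos _).le)
    _ = ν.real univ * exp (-1) := by rw [integral_const, smul_eq_mul]

end

lemma exp_neg_integral_llr_sub_le_integral_min_rnDeriv [IsProbabilityMeasure μ]
    [IsFiniteMeasure ν] (hμν : μ ≪ ν) (h_int : Integrable (llr μ ν) μ) :
    exp (-∫ x, llr μ ν x ∂μ - ν.real univ * exp (-1)) ≤
      ∫ x, min (μ.rnDeriv ν x).toReal 1 ∂ν := by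
  have h_pos_int : Integrable (fun x ↦ max (llr μ ν x) 0) μ := h_int.pos_part
  have h_neg_int : Integrable (fun x ↦ max (-llr μ ν x) 0) μ := h_int.neg.pos_part
  have h_split : ∫ x, max (llr μ ν x) 0 ∂μ = ∫ x, llr μ ν x ∂μ + ∫ x, max (-llr μ ν x) 0 ∂μ := by
    rw [← integral_add h_int h_neg_int]
    exact integral_congr_ae (ae_of_all _ fun x ↦ by
      linarith [max_zero_sub_max_neg_zero_eq_self (llr μ ν x)])
  have h_exp_int : Integrable (fun x ↦ exp (-max (llr μ ν x) 0)) μ :=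
    Integrable.of_bound (by fun_prop) 1 (ae_of_all _ fun x ↦ by
      rw [Real.norm_of_nonneg (exp_pos _).le, exp_le_one_iff, neg_nonpos]
      exact le_max_right _ _)
  rw [integral_min_rnDeriv_one_eq_integral_exp_neg hμν]
  calc exp (-∫ x, llr μ ν x ∂μ - ν.real univ * exp (-1))
      ≤ exp (∫ x, -max (llr μ ν x) 0 ∂μ) := by
        rw [integral_neg, h_split]
        gcongr
        linarith [integral_max_neg_llr_zero_le hμν]
    _ ≤ ∫ x, exp (-max (llr μ ν x) 0) ∂μ :=
        convexOn_exp.map_integral_le continuous_exp.continuousOn isClosed_univ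
          (ae_of_all _ fun _ ↦ mem_univ _) h_pos_int.neg h_exp_int

lemma half_mul_exp_neg_klDiv'_le_one_sub_tvDist [IsProbabilityMeasure μ] [IsProbabilityMeasure ν]
    (h : klDiv' μ ν ≠ ⊤) : 1 / 2 * exp (-(klDiv' μ ν).toReal) ≤ 1 - tvDist μ ν / 2 := by
  obtain ⟨hμν, h_int⟩ : μ ≪ ν ∧ Integrable (llr μ ν) μ := by
    by_contra hc
    exact h (if_neg hc)
  have h_toReal : (klDiv' μ ν).toReal = max (∫ x, llr μ ν x ∂μ) 0 := by
    rw [klDiv', if_pos ⟨hμν, h_int⟩, ENNReal.toReal_ofReal']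
  calc 1 / 2 * exp (-(klDiv' μ ν).toReal) ≤ exp (-∫ x, llr μ ν x ∂μ) * exp (-exp (-1)) := by
        rw [mul_comm, h_toReal]
        gcongr
        exacts [le_max_left _ _, half_le_exp_neg_exp_neg_one]
    _ ≤ ∫ x, min (μ.rnDeriv ν x).toReal 1 ∂ν := by
        simpa [← exp_add, sub_eq_add_neg] using
          exp_neg_integral_llr_sub_le_integral_min_rnDeriv hμν h_int
    _ ≤ 1 - tvDist μ ν / 2 := by
        linarith [tvDist_le_two_mul_one_sub_integral_min_rnDeriv (μ := μ) (ν := ν)]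

end

/-- Total variation bounded away from 2 under bounded Kullback–Leibler divergence:
for probability measures `μ, ν` with `D(μ‖ν) < ∞`, `1 - ‖μ-ν‖_TV/2 ≥ (1/2)e^{-D(μ‖ν)}`;
in particular for every `K` there is `δ(K) > 0` such that `D(μ‖ν) ≤ K` implies
`‖μ-ν‖_TV ≤ 2 - δ(K)`. -/
theorem tv_away_from_two_of_klDiv (α : Type*) [MeasurableSpace α] :
    (∀ μ ν : Measure α, IsProbabilityMeasure μ → IsProbabilityMeasure ν →
      klDiv' μ ν ≠ ⊤ →
      (1 / 2) * Real.exp (-(klDiv' μ ν).toReal) ≤ 1 - tvDist μ ν / 2) ∧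
    (∀ K : ℝ, ∃ δ : ℝ, 0 < δ ∧
      ∀ μ ν : Measure α, IsProbabilityMeasure μ → IsProbabilityMeasure ν →
        klDiv' μ ν ≤ ENNReal.ofReal K → tvDist μ ν ≤ 2 - δ) := by
  refine ⟨fun μ ν _ _ h ↦ half_mul_exp_neg_klDiv'_le_one_sub_tvDist h,
    fun K ↦ ⟨Real.exp (-max K 0), Real.exp_pos _, fun μ ν _ _ hK ↦ ?_⟩⟩
  have h_le : (klDiv' μ ν).toReal ≤ max K 0 :=
    ENNReal.toReal_le_of_le_ofReal (le_max_right _ _)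
      (hK.trans (ENNReal.ofReal_le_ofReal (le_max_left _ _)))
  have h_exp : Real.exp (-max K 0) ≤ Real.exp (-(klDiv' μ ν).toReal) := by gcongr
  linarith [half_mul_exp_neg_klDiv'_le_one_sub_tvDist
    (ne_top_of_le_ne_top ENNReal.ofReal_ne_top hK)]

end
end
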